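/- arXiv:1508.07062 — 2 statements merged into one kernel-verified Lean document; each statement's English description precedes it below -/
import Mathlib

section
/- Let E/F be a quadratic extension of p-adic fields, ψ an additive character of F such that ψ∘Tr_{E/F} is trivial on O_E, and χ a character of E^1 with deg(χ) = h ≥ 1 (χ trivial on E^1∩(1+P_E^h) but not on E^1∩(1+P_E^{h-1})). For a ∈ E^× with |a|_E = q_E^n, define F_χ(a) = ∫_{E^1} ψ(Tr_{E/F}(a u)) χ(u) du. If h > max{n, 1}, then F_χ(a) = 0. -/
set_option maxHeartbeats 1000000


open MeasureTheory

/-- Let `E/F` be a quadratic extension of p-adic fields (normed field `E` with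
residue cardinality `q_E = q`, involutive conjugation `conj`), `ψ` an additive character of
`F` with `ψ∘Tr_{E/F}` trivial on `O_E`, and `χ` a character of `E^1 = {x : x·x̄ = 1}` with
`deg(χ) = h ≥ 1` (trivial on `E^1 ∩ (1+P_E^h)`, nontrivial on `E^1 ∩ (1+P_E^{h-1})`).
For `a ∈ E^×` with `|a|_E = q_E^n`: if `h > max{n,1}` then
`F_χ(a) = ∫_{E^1} ψ(Tr_{E/F}(au)) χ(u) du = 0`. -/
theorem stmt_11 {E : Type*} [NormedField E] [MeasurableSpace E]
    (conj : E ≃+* E) (hconj : ∀ x : E, conj (conj x) = x)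
    (q : ℝ) (hq : 1 < q)
    (μ : Measure E)
    (hμinv : ∀ z : E, z * conj z = 1 → ∀ s : Set E, μ ((z * ·) '' s) = μ s)
    (hμfin : μ {x : E | x * conj x = 1} ≠ ⊤)
    (hμpos : μ {x : E | x * conj x = 1} ≠ 0)
    (ψ : E → ℂ) (hψadd : ∀ x y : E, ψ (x + y) = ψ x * ψ y)
    (hψtriv : ∀ x : E, ‖x‖ ≤ 1 → ψ (x + conj x) = 1)
    (χ : E → ℂ)
    (hχmul : ∀ x y : E, x * conj x = 1 → y * conj y = 1 → χ (x * y) = χ x * χ y)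
    (h : ℕ) (hh : 1 ≤ h)
    (hχtriv : ∀ x : E, x * conj x = 1 → ‖x - 1‖ ≤ q ^ (-(h : ℤ)) → χ x = 1)
    (hχnt : ∃ x : E, x * conj x = 1 ∧ ‖x - 1‖ ≤ q ^ (-(h : ℤ) + 1) ∧ χ x ≠ 1)
    (a : E) (n : ℤ) (hna : ‖a‖ = q ^ n)
    (hhn : max n 1 < (h : ℤ)) :
    (∫ u in {x : E | x * conj x = 1}, ψ (a * u + conj (a * u)) * χ u ∂μ) = 0 := by
  have hq0 : (0:ℝ) < q := lt_trans one_pos hq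
  set S : Set E := {x : E | x * conj x = 1} with hSdef
  set g : E → ℂ := fun u => ψ (a * u + conj (a * u)) * χ u with hgdef
  obtain ⟨z, hz1, hz2, hz3⟩ := hχnt
  -- basic facts about S
  have hSmul : ∀ x y : E, x ∈ S → y ∈ S → x * y ∈ S := by
    intro x y hx hy
    have : (x * y) * conj (x * y) = (x * conj x) * (y * conj y) := by
      rw [map_mul]; ring
    simp only [hSdef, Set.mem_setOf_eq] at *
    rw [this, hx, hy, mul_one]
  have hconj1 : conj (1 : E) = 1 := map_one conj.toRingHom
  have h1S : (1 : E) ∈ S := by simp [hSdef, hconj1]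
  have hconjS : ∀ x : E, x ∈ S → conj x ∈ S := by
    intro x hx
    simp only [hSdef, Set.mem_setOf_eq] at *
    rw [hconj x, mul_comm]; exact hx
  have hzS : z ∈ S := hz1
  have hzbS : conj z ∈ S := hconjS z hzS
  -- χ 1 = 1
  have hχ1 : χ 1 = 1 := by
    apply hχtriv 1 h1S
    simp only [sub_self, norm_zero]
    positivity
  set c : ℂ := χ z with hcdef
  have hc1 : c ≠ 1 := hz3
  have hc0 : c ≠ 0 := by
    have : χ (z * conj z) = χ z * χ (conj z) := hχmul z (conj z) hzS hzbS
    rw [hz1, hχ1] at this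
    exact left_ne_zero_of_mul_eq_one this.symm
  -- the key pointwise triviality of ψ on traces of the relevant elements
  have hψkey : ∀ u : E, u ∈ S → ψ (a * u * (z - 1) + conj (a * u * (z - 1))) = 1 := by
    intro u hu
    by_cases hA : ∀ x : E, ‖x‖ ≤ 1 → ‖conj x‖ ≤ 1
    · -- conjugation does not increase norms: then ‖u‖ = 1 for u ∈ S
      have huprod : ‖u‖ * ‖conj u‖ = 1 := by
        rw [← norm_mul]
        have : u * conj u = 1 := hu
        rw [this, norm_one]
      have hule : ‖u‖ ≤ 1 := by
        by_contra hgt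
        push_neg at hgt
        have hcu : ‖conj u‖ < 1 := by
          nlinarith [norm_nonneg (conj u)]
        have := hA (conj u) hcu.le
        rw [hconj u] at this
        linarith
      have huge : 1 ≤ ‖u‖ := by
        have := hA u hule
        nlinarith [norm_nonneg u]
      have hu1 : ‖u‖ = 1 := le_antisymm hule huge
      apply hψtriv
      have hnorm : ‖a * u * (z - 1)‖ = q ^ n * ‖z - 1‖ := by
        rw [norm_mul, norm_mul, hna, hu1, mul_one]
      rw [hnorm]
      have hnh : n + (-(h:ℤ) + 1) ≤ 0 := by
        have := le_max_left n 1
        omega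
      calc q ^ n * ‖z - 1‖ ≤ q ^ n * q ^ (-(h:ℤ) + 1) := by
            apply mul_le_mul_of_nonneg_left hz2 (le_of_lt (zpow_pos hq0 n))
        _ = q ^ (n + (-(h:ℤ) + 1)) := (zpow_add₀ (ne_of_gt hq0) n _).symm
        _ ≤ 1 := zpow_le_one_of_nonpos₀ hq.le hnh
    · -- conjugation badly non-isometric: then ψ∘Tr is trivial everywhere
      push_neg at hA
      obtain ⟨x, hx1, hx2⟩ := hA
      have hcx0 : conj x ≠ 0 := by
        intro h0
        rw [h0, norm_zero] at hx2; linarith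
      have hx0 : x ≠ 0 := by
        intro h0
        apply hcx0; rw [h0, map_zero]
      set x₁ : E := x * (conj x)⁻¹ with hx₁def
      have hx₁norm : ‖x₁‖ = ‖x‖ * ‖conj x‖⁻¹ := by rw [norm_mul, norm_inv]
      have hcx₁ : conj x₁ = conj x * x⁻¹ := by
        rw [hx₁def, map_mul, map_inv₀, hconj x]
      have hcx₁norm : ‖conj x₁‖ = ‖conj x‖ * ‖x‖⁻¹ := by rw [hcx₁, norm_mul, norm_inv]
      have hxpos : (0:ℝ) < ‖x‖ := norm_pos_iff.mpr hx0
      have hcxpos : (0:ℝ) < ‖conj x‖ := norm_pos_iff.mpr hcx0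
      set r : ℝ := ‖x₁‖ with hrdef
      set R : ℝ := ‖conj x₁‖ with hRdef
      have hr0 : 0 ≤ r := norm_nonneg _
      have hr1 : r < 1 := by
        rw [hx₁norm]
        rw [mul_inv_lt_iff₀ hcxpos, one_mul]
        linarith
      have hR1 : 1 < R := by
        rw [hcx₁norm]
        rw [lt_mul_inv_iff₀ hxpos, one_mul]
        calc ‖x‖ ≤ 1 := hx1
          _ < ‖conj x‖ := hx2
      -- ψ is trivial on all traces
      have htrace : ∀ y : E, ψ (y + conj y) = 1 := by
        intro y
        obtain ⟨k₁, hk₁⟩ := exists_pow_lt_of_lt_one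
          (show (0:ℝ) < (1 - r)/(‖y‖ + 1) by
            apply div_pos (by linarith) (by positivity)) hr1
        obtain ⟨k₂, hk₂⟩ := pow_unbounded_of_one_lt (‖conj y‖ + 1) hR1
        set k : ℕ := max (max k₁ k₂) 1 with hkdef
        have hk1le : k₁ ≤ k := le_trans (le_max_left _ _) (le_max_left _ _)
        have hk2le : k₂ ≤ k := le_trans (le_max_right _ _) (le_max_left _ _)
        have h1k : 1 ≤ k := le_max_right _ _
        have hrk : r ^ k ≤ r ^ k₁ := pow_le_pow_of_le_one hr0 hr1.le hk1le
        have hrk' : r ^ k ≤ r := by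
          calc r ^ k ≤ r ^ 1 := pow_le_pow_of_le_one hr0 hr1.le h1k
            _ = r := pow_one r
        have hRk : R ^ k₂ ≤ R ^ k := pow_le_pow_right₀ hR1.le hk2le
        set d : E := 1 + x₁ ^ k with hddef
        have hcd : conj d = 1 + (conj x₁) ^ k := by
          rw [hddef, map_add, map_one, map_pow]
        have hcdnorm : ‖conj y‖ + 1 ≤ ‖conj d‖ + 1 := by
          have h1 : R ^ k = ‖conj d - 1‖ := by
            rw [hcd]; rw [add_sub_cancel_left, norm_pow]
          have h2 : ‖conj d - 1‖ ≤ ‖conj d‖ + 1 := by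
            calc ‖conj d - 1‖ ≤ ‖conj d‖ + ‖(1:E)‖ := norm_sub_le _ _
              _ = ‖conj d‖ + 1 := by rw [norm_one]
          have h3 : ‖conj y‖ + 1 < R ^ k := lt_of_lt_of_le hk₂ hRk
          linarith
        have hcdpos : ‖conj y‖ ≤ ‖conj d‖ := by linarith
        have hcd0 : conj d ≠ 0 := by
          intro h0
          rw [h0, norm_zero] at hcdpos
          have h3 : ‖conj y‖ + 1 < R ^ k := lt_of_lt_of_le hk₂ hRk
          have h1 : R ^ k = ‖conj d - 1‖ := by
            rw [hcd]; rw [add_sub_cancel_left, norm_pow]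
          rw [h0] at h1
          simp only [zero_sub, norm_neg, norm_one] at h1
          nlinarith [norm_nonneg (conj y)]
        have hd0 : d ≠ 0 := by
          intro h0
          apply hcd0; rw [h0, map_zero]
        have hdnorm : 1 - r ≤ ‖d‖ := by
          have h1 : ‖x₁ ^ k‖ = r ^ k := by rw [norm_pow]
          have h2 : (1:ℝ) ≤ ‖d‖ + ‖x₁ ^ k‖ := by
            calc (1:ℝ) = ‖d - x₁ ^ k‖ := by rw [hddef]; simp
              _ ≤ ‖d‖ + ‖x₁ ^ k‖ := norm_sub_le _ _
          rw [h1] at h2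
          linarith
        have hdpos : (0:ℝ) < ‖d‖ := by linarith
        set y₁ : E := y * x₁ ^ k / d with hy₁def
        set y₂ : E := y / d with hy₂def
        have hsum : y₁ + y₂ = y := by
          rw [hy₁def, hy₂def]
          field_simp
          ring
        have hy₁norm : ‖y₁‖ ≤ 1 := by
          rw [hy₁def, norm_div, norm_mul, norm_pow]
          rw [div_le_one hdpos]
          have hb : r ^ k₁ * (‖y‖ + 1) < 1 - r := by
            rw [← lt_div_iff₀ (by positivity : (0:ℝ) < ‖y‖ + 1)]
            exact hk₁
          have hb2 : r ^ k * (‖y‖ + 1) ≤ r ^ k₁ * (‖y‖ + 1) := by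
            apply mul_le_mul_of_nonneg_right hrk (by positivity)
          nlinarith [norm_nonneg y, pow_nonneg hr0 k]
        have hy₂norm : ‖conj y₂‖ ≤ 1 := by
          rw [hy₂def, map_div₀, norm_div]
          rw [div_le_one (norm_pos_iff.mpr hcd0)]
          exact hcdpos
        have hψ1 : ψ (y₁ + conj y₁) = 1 := hψtriv y₁ hy₁norm
        have hψ2 : ψ (y₂ + conj y₂) = 1 := by
          have := hψtriv (conj y₂) hy₂norm
          rw [hconj y₂] at this
          rw [add_comm]
          exact this
        have hdecomp : y + conj y = (y₁ + conj y₁) + (y₂ + conj y₂) := by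
          conv_lhs => rw [← hsum]
          rw [map_add]
          ring
        rw [hdecomp, hψadd, hψ1, hψ2, mul_one]
      exact htrace _
  -- the key multiplicative identity for the integrand
  have hkey : ∀ u : E, u ∈ S → g (z * u) = c * g u := by
    intro u hu
    have hsplit : a * (z * u) + conj (a * (z * u))
        = (a * u + conj (a * u)) + (a * u * (z - 1) + conj (a * u * (z - 1))) := by
      have h1 : a * (z * u) = (a * u) + (a * u * (z - 1)) := by ring
      rw [h1, map_add]
      ring
    have hχzu : χ (z * u) = χ z * χ u := hχmul z u hzS hu
    simp only [hgdef]
    rw [hsplit, hψadd, hψkey u hu, mul_one, hχzu]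
    ring
  -- Now the measure-theoretic argument
  by_cases hAE : AEStronglyMeasurable g (μ.restrict S)
  · set ρ : Measure E := μ.restrict S with hρdef
    set g₀ : E → ℂ := hAE.mk g with hg₀def
    have hg₀m : StronglyMeasurable g₀ := hAE.stronglyMeasurable_mk
    have hae : g =ᵐ[ρ] g₀ := hAE.ae_eq_mk
    have hN : ρ {x | g x ≠ g₀ x} = 0 := by
      have := ae_iff.mp hae
      simpa using this
    obtain ⟨N', hNsub, hN'm, hN'0⟩ := exists_measurable_superset_of_null hN
    have hN'S : μ (N' ∩ S) = 0 := by
      rw [← Measure.restrict_apply hN'm]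
      exact hN'0
    -- outer measure equality between level sets of g and g₀ over S
    have hsame : ∀ B : Set ℂ, μ (g₀ ⁻¹' B ∩ S) = μ (g ⁻¹' B ∩ S) := by
      intro B
      have hsub1 : g₀ ⁻¹' B ∩ S ⊆ (g ⁻¹' B ∩ S) ∪ (N' ∩ S) := by
        rintro v ⟨hvB, hvS⟩
        by_cases hv : g v = g₀ v
        · left; exact ⟨by rw [Set.mem_preimage, hv]; exact hvB, hvS⟩
        · right; exact ⟨hNsub hv, hvS⟩
      have hsub2 : g ⁻¹' B ∩ S ⊆ (g₀ ⁻¹' B ∩ S) ∪ (N' ∩ S) := by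
        rintro v ⟨hvB, hvS⟩
        by_cases hv : g v = g₀ v
        · left; exact ⟨by rw [Set.mem_preimage, ← hv]; exact hvB, hvS⟩
        · right; exact ⟨hNsub hv, hvS⟩
      apply le_antisymm
      · calc μ (g₀ ⁻¹' B ∩ S) ≤ μ ((g ⁻¹' B ∩ S) ∪ (N' ∩ S)) := measure_mono hsub1
          _ ≤ μ (g ⁻¹' B ∩ S) + μ (N' ∩ S) := measure_union_le _ _
          _ = μ (g ⁻¹' B ∩ S) := by rw [hN'S, add_zero]
      · calc μ (g ⁻¹' B ∩ S) ≤ μ ((g₀ ⁻¹' B ∩ S) ∪ (N' ∩ S)) := measure_mono hsub2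
          _ ≤ μ (g₀ ⁻¹' B ∩ S) + μ (N' ∩ S) := measure_union_le _ _
          _ = μ (g₀ ⁻¹' B ∩ S) := by rw [hN'S, add_zero]
    -- invariance of the distribution of g under multiplication by c
    have himg : ∀ B : Set ℂ, (z * ·) '' (g ⁻¹' B ∩ S) = g ⁻¹' ((c * ·) '' B) ∩ S := by
      intro B
      ext v
      constructor
      · rintro ⟨u, ⟨huB, huS⟩, rfl⟩
        refine ⟨?_, hSmul z u hzS huS⟩
        rw [Set.mem_preimage, hkey u huS]
        exact ⟨g u, huB, rfl⟩
      · rintro ⟨hvB, hvS⟩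
        rw [Set.mem_preimage] at hvB
        obtain ⟨b, hbB, hbv⟩ := hvB
        have hvS' : conj z * v ∈ S := hSmul (conj z) v hzbS hvS
        have hzv : z * (conj z * v) = v := by rw [← mul_assoc, hz1, one_mul]
        have hgv : g v = c * g (conj z * v) := by
          conv_lhs => rw [← hzv]
          exact hkey _ hvS'
        have hgb : g (conj z * v) = b := mul_left_cancel₀ hc0 (hgv.symm.trans hbv.symm)
        exact ⟨conj z * v, ⟨by rw [Set.mem_preimage, hgb]; exact hbB, hvS'⟩, hzv⟩
    have hcore : ∀ B : Set ℂ, μ (g ⁻¹' B ∩ S) = μ (g ⁻¹' ((c * ·) '' B) ∩ S) := by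
      intro B
      rw [← himg B, hμinv z hz1]
    -- build the pushforward measure
    set ν : Measure ℂ := ρ.map g₀ with hνdef
    have hmeasmul : Measurable fun x : ℂ => c * x := (measurable_id.const_mul c)
    have himpre : ∀ B : Set ℂ, MeasurableSet B → MeasurableSet ((c * ·) '' B) := by
      intro B hB
      have : (c * ·) '' B = (fun x : ℂ => c⁻¹ * x) ⁻¹' B := by
        ext w
        simp only [Set.mem_image, Set.mem_preimage]
        constructor
        · rintro ⟨b, hb, rfl⟩
          rwa [← mul_assoc, inv_mul_cancel₀ hc0, one_mul]
        · intro hw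
          exact ⟨c⁻¹ * w, hw, by rw [← mul_assoc, mul_inv_cancel₀ hc0, one_mul]⟩
      rw [this]
      exact (measurable_id.const_mul c⁻¹) hB
    have hνinv : ν.map (fun x : ℂ => c * x) = ν := by
      apply Measure.ext
      intro B hB
      rw [Measure.map_apply hmeasmul hB]
      rw [hνdef, Measure.map_apply hg₀m.measurable (hmeasmul hB),
        Measure.map_apply hg₀m.measurable hB]
      have hpreB : MeasurableSet ((fun x : ℂ => c * x) ⁻¹' B) := hmeasmul hB
      rw [hρdef, Measure.restrict_apply (hg₀m.measurable hpreB),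
        Measure.restrict_apply (hg₀m.measurable hB)]
      rw [hsame, hsame]
      have := hcore ((fun x : ℂ => c * x) ⁻¹' B)
      rw [Set.image_preimage_eq B (mul_left_surjective₀ hc0)] at this
      exact this
    -- conclude
    have e1 : (∫ u in S, g u ∂μ) = ∫ x, x ∂ν := by
      have h1 : (∫ u in S, g u ∂μ) = ∫ u, g₀ u ∂ρ := integral_congr_ae hae
      have h2 : ∫ x, id x ∂(Measure.map g₀ ρ) = ∫ u, id (g₀ u) ∂ρ :=
        integral_map hg₀m.aemeasurable aestronglyMeasurable_id
      simp only [id_eq] at h2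
      rw [h1, hνdef, h2]
    have e2 : (∫ x, x ∂ν) = c * ∫ x, x ∂ν := by
      have h2 : ∫ x, id x ∂(Measure.map (fun x : ℂ => c * x) ν) = ∫ x, id (c * x) ∂ν :=
        integral_map hmeasmul.aemeasurable aestronglyMeasurable_id
      simp only [id_eq] at h2
      rw [hνinv] at h2
      calc (∫ x : ℂ, x ∂ν) = ∫ x : ℂ, c * x ∂ν := h2
        _ = c * ∫ x : ℂ, x ∂ν := by
            have := integral_smul (μ := ν) c (fun x : ℂ => x)
            simpa [smul_eq_mul] using this
    have e3 : (1 - c) * (∫ x, x ∂ν) = 0 := by linear_combination e2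
    have e4 : (∫ x, x ∂ν) = 0 := by
      rcases mul_eq_zero.mp e3 with h0 | h0
      · exact absurd (by linear_combination -h0 : c = 1) hc1
      · exact h0
    rw [e1, e4]
  · exact integral_non_aestronglyMeasurable hAE
end

section
/- With the Weil representation of SL_2(F) on S(F²) given by ω(n(b))φ(x,y) = ψ^{-1}(bxy)φ(x,y) and ω(w)φ(x,y) = ∫ φ(u,v)ψ^{-1}(xv-yu)dudv (with ω(w^{-1}) its inverse), the function φ^m(x,y) = 1_{1+P^m}(x)1_{1+P^m}(y) is fixed by ω(n̄(c)) = ω(w^{-1})ω(n(c))ω(w) for all c ∈ P^{3m}; i.e., ω(n̄(c))φ^m = φ^m. -/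
open MeasureTheory

/-- `φ^m(x,y) = 1_{1+P^m}(x)·1_{1+P^m}(y)`. -/
noncomputable def phim {F : Type*} [NormedField F] (q : ℝ) (m : ℕ) : F → F → ℂ :=
  fun x y => if ‖x - 1‖ ≤ q ^ (-(m : ℤ)) ∧ ‖y - 1‖ ≤ q ^ (-(m : ℤ)) then 1 else 0

/-- `ω(n(b))φ(x,y) = ψ⁻¹(bxy)·φ(x,y)`. -/
noncomputable def omegaN {F : Type*} [NormedField F] (ψ : F → ℂ) (b : F)
    (f : F → F → ℂ) : F → F → ℂ :=
  fun x y => ψ (-(b * x * y)) * f x y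

/-- `ω(w)φ(x,y) = ∫_{F²} φ(u,v) ψ⁻¹(xv - yu) du dv`. -/
noncomputable def omegaW {F : Type*} [NormedField F] [MeasurableSpace F]
    (μ : Measure F) (ψ : F → ℂ) (f : F → F → ℂ) : F → F → ℂ :=
  fun x y => ∫ p : F × F, f p.1 p.2 * ψ (-(x * p.2 - y * p.1)) ∂(μ.prod μ)

/-!
At `(x, y)` the integrand of `ω(w)φ^m` is `1_{1+P^m}(u) 1_{1+P^m}(v) ψ(yu) ψ(-xv)`. Translating
`(u, v)` by `(t₁, t₂) ∈ P^m × P^m` leaves the indicators unchanged and multiplies the integrand by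
`ψ(yt₁ - xt₂)`, so by translation invariance `ω(w)φ^m(x, y) = 0` unless `ψ(x ·)` and `ψ(y ·)` are
trivial on `P^m`. In that case the nontrivial value of `ψ` on `P^{-1}` forces `‖y‖ ≤ q^{m+1}`,
hence `‖cy‖ ≤ q^{-m}` and `ψ(-cxy) = ψ(x · (-cy)) = 1`. Either way `ω(n(c))` fixes `ω(w)φ^m`.

The measure `μ` is translation invariant only as an outer measure, with neither σ-finiteness nor
measurability of translations, so invariance of integrals is proved by hand: the translate of a
measurable function with finite integral is null measurable and has the same distribution. On
`F × F` this is applied slice by slice, through the kernel defining `μ.prod μ`.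
-/

open scoped ENNReal

section PreservesOuterMeasure

variable {α : Type*} [MeasurableSpace α] {μ : Measure α} {σ : α ≃ α}

def PreservesOuterMeasure (μ : Measure α) (σ : α ≃ α) : Prop :=
  ∀ s : Set α, μ (σ ⁻¹' s) = μ s

theorem PreservesOuterMeasure.symm (hσ : PreservesOuterMeasure μ σ) :
    PreservesOuterMeasure μ σ.symm := fun s => by
  rw [← hσ, ← Set.preimage_comp, Equiv.symm_comp_self, Set.preimage_id]

theorem PreservesOuterMeasure.ae_comp (hσ : PreservesOuterMeasure μ σ) {P : α → Prop}
    (h : ∀ᵐ x ∂μ, P x) : ∀ᵐ x ∂μ, P (σ x) :=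
  ae_iff.2 ((hσ {x | ¬P x}).trans (ae_iff.1 h))

theorem PreservesOuterMeasure.nullMeasurableSet_preimage (hσ : PreservesOuterMeasure μ σ)
    {A : Set α} (hA : MeasurableSet A) (hAfin : μ A ≠ ∞) : NullMeasurableSet (σ ⁻¹' A) μ := by
  set E := toMeasurable μ (σ ⁻¹' A)
  have hE : μ E = μ A := (measure_toMeasurable _).trans (hσ A)
  have hA_eq : σ.symm ⁻¹' (σ ⁻¹' A) = A := by
    rw [← Set.preimage_comp, Equiv.self_comp_symm, Set.preimage_id]
  have hA_sub : A ⊆ σ.symm ⁻¹' E := hA_eq ▸ Set.preimage_mono (subset_toMeasurable _ _)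
  have hdiff : μ (E \ σ ⁻¹' A) = 0 := by
    rw [← hσ.symm, Set.preimage_sdiff, hA_eq, measure_sdiff hA_sub hA.nullMeasurableSet hAfin,
      hσ.symm, hE, tsub_self]
  refine (measurableSet_toMeasurable μ _).nullMeasurableSet.congr (ae_eq_set.2 ⟨hdiff, ?_⟩)
  rw [Set.sdiff_eq_empty.2 (subset_toMeasurable _ _), measure_empty]

-- `support L` is covered by the sets `{(n + 1)⁻¹ ≤ L}`, of finite measure by Markov's inequality.
theorem PreservesOuterMeasure.nullMeasurableSet_preimage_of_subset_support
    (hσ : PreservesOuterMeasure μ σ) {L : α → ℝ≥0∞} (hL : Measurable L)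
    (hfin : ∫⁻ x, L x ∂μ ≠ ∞) {A : Set α} (hA : MeasurableSet A) (hAL : A ⊆ Function.support L) :
    NullMeasurableSet (σ ⁻¹' A) μ := by
  have hcover : A = ⋃ n : ℕ, A ∩ {x | ((n + 1 : ℕ) : ℝ≥0∞)⁻¹ ≤ L x} := by
    refine (Set.iUnion_subset fun _ => Set.inter_subset_left).antisymm' fun x hx => ?_
    obtain ⟨n, hn⟩ := ENNReal.exists_inv_nat_lt (hAL hx)
    refine Set.mem_iUnion.2 ⟨n, hx, le_trans ?_ hn.le⟩
    gcongr
    exact_mod_cast n.le_succ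
  rw [hcover, Set.preimage_iUnion]
  refine .iUnion fun n => hσ.nullMeasurableSet_preimage (hA.inter (measurableSet_le
    measurable_const hL)) (measure_ne_top_of_subset Set.inter_subset_right ?_)
  exact ((meas_ge_le_lintegral_div hL.aemeasurable (by simp) (by simp)).trans_lt
    (ENNReal.div_lt_top hfin (by simp))).ne

theorem PreservesOuterMeasure.nullMeasurable_comp (hσ : PreservesOuterMeasure μ σ)
    {L : α → ℝ≥0∞} (hL : Measurable L) (hfin : ∫⁻ x, L x ∂μ ≠ ∞) :
    NullMeasurable (L ∘ σ) μ := by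
  intro s hs
  by_cases h0 : (0 : ℝ≥0∞) ∈ s
  · rw [← compl_compl s, Set.preimage_compl]
    refine (hσ.nullMeasurableSet_preimage_of_subset_support hL hfin (hL hs.compl)
      fun x hx hx0 => hx (hx0 ▸ h0)).compl
  · exact hσ.nullMeasurableSet_preimage_of_subset_support hL hfin (hL hs)
      fun x hx hx0 => h0 (hx0 ▸ hx)

theorem PreservesOuterMeasure.lintegral_comp (hσ : PreservesOuterMeasure μ σ)
    {L : α → ℝ≥0∞} (hL : AEMeasurable L μ) (hfin : ∫⁻ x, L x ∂μ ≠ ∞) :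
    ∫⁻ x, L (σ x) ∂μ = ∫⁻ x, L x ∂μ := by
  obtain ⟨L', hL', hLL'⟩ := hL
  rw [lintegral_congr_ae hLL'] at hfin ⊢
  rw [lintegral_congr_ae (hσ.ae_comp hLL')]
  have hL'σ : AEMeasurable (L' ∘ σ) μ := (hσ.nullMeasurable_comp hL' hfin).aemeasurable
  have hmap : μ.map (L' ∘ σ) = μ.map L' := by
    ext s hs
    rw [Measure.map_apply_of_aemeasurable hL'σ hs, Measure.map_apply hL' hs]
    exact hσ (L' ⁻¹' s)
  calc ∫⁻ x, L' (σ x) ∂μ = ∫⁻ y, y ∂μ.map (L' ∘ σ) :=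
        (lintegral_map' aemeasurable_id hL'σ).symm
    _ = ∫⁻ x, L' x ∂μ := by rw [hmap]; exact lintegral_map' aemeasurable_id hL'.aemeasurable

end PreservesOuterMeasure

section Prod

variable {α β : Type*} [MeasurableSpace α] [MeasurableSpace β] {μ : Measure α} {ν : Measure β}

theorem prod_eq_zero_of_not_aemeasurable
    (hk : ¬AEMeasurable (fun u => ν.map (Prod.mk u)) μ) : μ.prod ν = 0 := by
  rw [Measure.prod, Measure.bind, Measure.map_of_not_aemeasurable hk, Measure.join_zero]

theorem lintegral_prod_of_aemeasurable (hk : AEMeasurable (fun u => ν.map (Prod.mk u)) μ)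
    {h : α × β → ℝ≥0∞} (hh : Measurable h) :
    ∫⁻ p, h p ∂μ.prod ν = ∫⁻ u, ∫⁻ v, h (u, v) ∂ν ∂μ := by
  rw [Measure.prod, Measure.lintegral_bind hk hh.aemeasurable]
  exact lintegral_congr fun _ => lintegral_map hh measurable_prodMk_left

theorem aemeasurable_lintegral_prodMk (hk : AEMeasurable (fun u => ν.map (Prod.mk u)) μ)
    {h : α × β → ℝ≥0∞} (hh : Measurable h) :
    AEMeasurable (fun u => ∫⁻ v, h (u, v) ∂ν) μ :=
  ((Measure.measurable_lintegral hh).comp_aemeasurable hk).congr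
    (ae_of_all _ fun _ => lintegral_map hh measurable_prodMk_left)

theorem ae_ae_of_ae_prod_of_aemeasurable (hk : AEMeasurable (fun u => ν.map (Prod.mk u)) μ)
    {P : α × β → Prop} (h : ∀ᵐ p ∂μ.prod ν, P p) : ∀ᵐ u ∂μ, ∀ᵐ v ∂ν, P (u, v) := by
  rw [Measure.prod] at h
  exact (Measure.ae_ae_of_ae_bind hk h).mono fun u hu =>
    ae_of_ae_map measurable_prodMk_left.aemeasurable hu

variable {σ : α ≃ α} {τ : β ≃ β}

theorem PreservesOuterMeasure.lintegral_prod_eq (hσ : PreservesOuterMeasure μ σ)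
    (hτ : PreservesOuterMeasure ν τ) (hk : AEMeasurable (fun u => ν.map (Prod.mk u)) μ)
    {h₁ h₂ : α × β → ℝ≥0∞} (hh₁ : Measurable h₁) (hh₂ : Measurable h₂)
    (hfin : ∫⁻ p, h₁ p ∂μ.prod ν ≠ ∞) (h : ∀ᵐ u ∂μ, ∀ᵐ v ∂ν, h₂ (u, v) = h₁ (σ u, τ v)) :
    ∫⁻ p, h₂ p ∂μ.prod ν = ∫⁻ p, h₁ p ∂μ.prod ν := by
  rw [lintegral_prod_of_aemeasurable hk hh₁] at hfin ⊢
  rw [lintegral_prod_of_aemeasurable hk hh₂]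
  have hI := aemeasurable_lintegral_prodMk hk hh₁
  calc ∫⁻ u, ∫⁻ v, h₂ (u, v) ∂ν ∂μ = ∫⁻ u, ∫⁻ v, h₁ (σ u, v) ∂ν ∂μ := by
        refine lintegral_congr_ae ?_
        filter_upwards [h, hσ.ae_comp ((ae_lt_top' hI hfin).mono fun _ => ne_of_lt)]
          with u hu hfu
        rw [lintegral_congr_ae hu]
        exact hτ.lintegral_comp (hh₁.comp measurable_prodMk_left).aemeasurable hfu
    _ = ∫⁻ u, ∫⁻ v, h₁ (u, v) ∂ν ∂μ := hσ.lintegral_comp hI hfin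

end Prod

section Integral

variable {E : Type*} [NormedAddCommGroup E] [NormedSpace ℝ E] [CompleteSpace E]

theorem integral_eq_of_forall_lintegral_ofReal_eq {X : Type*} [MeasurableSpace X]
    {ρ : Measure X} {g₁ g₂ : X → E} (hg₁ : Integrable g₁ ρ) (hg₂ : Integrable g₂ ρ)
    (h : ∀ φ : StrongDual ℝ E,
      ∫⁻ x, ENNReal.ofReal (φ (g₁ x)) ∂ρ = ∫⁻ x, ENNReal.ofReal (φ (g₂ x)) ∂ρ) :
    ∫ x, g₁ x ∂ρ = ∫ x, g₂ x ∂ρ := by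
  refine (SeparatingDual.eq_iff_forall_dual_eq (R := ℝ)).2 fun φ => ?_
  have hneg : ∀ g : X → E, ∀ x, -φ (g x) = (-φ) (g x) := fun _ _ => rfl
  rw [← φ.integral_comp_comm hg₁, ← φ.integral_comp_comm hg₂,
    integral_eq_lintegral_pos_part_sub_lintegral_neg_part (φ.integrable_comp hg₁),
    integral_eq_lintegral_pos_part_sub_lintegral_neg_part (φ.integrable_comp hg₂)]
  simp only [hneg, h]

variable {α β : Type*} [MeasurableSpace α] [MeasurableSpace β] {μ : Measure α} {ν : Measure β}
  {σ : α ≃ α} {τ : β ≃ β}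

theorem PreservesOuterMeasure.integral_prod_comp (hσ : PreservesOuterMeasure μ σ)
    (hτ : PreservesOuterMeasure ν τ) {f : α × β → E} (hf : Integrable f (μ.prod ν))
    (hfστ : Integrable (fun p => f (σ p.1, τ p.2)) (μ.prod ν)) :
    ∫ p, f (σ p.1, τ p.2) ∂μ.prod ν = ∫ p, f p ∂μ.prod ν := by
  by_cases hk : AEMeasurable (fun u => ν.map (Prod.mk u)) μ
  swap
  · simp [prod_eq_zero_of_not_aemeasurable hk]
  obtain ⟨g, hg, hfg⟩ := hf.1
  obtain ⟨g', hg', hfg'⟩ := hfστ.1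
  have hslice : ∀ᵐ u ∂μ, ∀ᵐ v ∂ν, g' (u, v) = g (σ u, τ v) := by
    have h := ae_ae_of_ae_prod_of_aemeasurable hk hfg
    have h' := ae_ae_of_ae_prod_of_aemeasurable hk hfg'
    filter_upwards [h', hσ.ae_comp (h.mono fun u hu => hτ.ae_comp hu)] with u hu hu'
    filter_upwards [hu, hu'] with v hv hv'
    exact hv.symm.trans hv'
  have hgi : Integrable g (μ.prod ν) := hf.congr hfg
  rw [integral_congr_ae hfg, integral_congr_ae hfg']
  refine integral_eq_of_forall_lintegral_ofReal_eq (hfστ.congr hfg') hgi fun φ => ?_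
  have hmeas : ∀ {k : α × β → E}, StronglyMeasurable k →
      Measurable fun p => ENNReal.ofReal (φ (k p)) := fun hk =>
    (φ.continuous.comp_stronglyMeasurable hk).measurable.ennreal_ofReal
  exact hσ.lintegral_prod_eq hτ hk (hmeas hg) (hmeas hg')
    (φ.integrable_comp hgi).lintegral_lt_top.ne
    (hslice.mono fun u hu => hu.mono fun v hv => by simp only [hv])

end Integral

theorem PreservesOuterMeasure.integral_prod_eq_zero_of_comp_eq_smul {α β E : Type*}
    [MeasurableSpace α] [MeasurableSpace β] [NormedAddCommGroup E] [NormedSpace ℂ E]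
    [CompleteSpace E] {μ : Measure α} {ν : Measure β} {σ : α ≃ α} {τ : β ≃ β}
    (hσ : PreservesOuterMeasure μ σ) (hτ : PreservesOuterMeasure ν τ) {f : α × β → E} {e : ℂ}
    (he : e ≠ 1) (hf : ∀ u v, f (σ u, τ v) = e • f (u, v)) : ∫ p, f p ∂μ.prod ν = 0 := by
  by_cases hfi : Integrable f (μ.prod ν)
  swap
  · exact integral_undef hfi
  have h : ∫ p, f p ∂μ.prod ν = e • ∫ p, f p ∂μ.prod ν := by
    rw [← integral_smul, ← hσ.integral_prod_comp hτ hfi (by simp only [hf]; exact hfi.smul e)]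
    simp only [hf]
  have h' : (1 - e) • ∫ p, f p ∂μ.prod ν = 0 := by rw [sub_smul, one_smul, ← h, sub_self]
  exact (smul_eq_zero.1 h').resolve_left (sub_ne_zero.2 he.symm)

theorem preservesOuterMeasure_addRight {G : Type*} [AddCommGroup G] [MeasurableSpace G]
    {μ : Measure G} (hinv : ∀ (a : G) (s : Set G), μ ((a + ·) '' s) = μ s) (t : G) :
    PreservesOuterMeasure μ (Equiv.addRight t) := fun s => by
  have : (Equiv.addRight t) ⁻¹' s = (-t + ·) '' s := by
    rw [Set.image_add_left, neg_neg]
    ext; simp [add_comm]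
  rw [this, hinv]

section Weil

variable {F : Type*} [NormedField F]

theorem norm_add_sub_le_iff_of_norm_le {E : Type*} [SeminormedAddCommGroup E]
    (hultra : ∀ x y : E, ‖x + y‖ ≤ max ‖x‖ ‖y‖) {r : ℝ} {t : E} (ht : ‖t‖ ≤ r) (v a : E) :
    ‖v + t - a‖ ≤ r ↔ ‖v - a‖ ≤ r := by
  have hadd : ∀ b c : E, ‖b‖ ≤ r → ‖c‖ ≤ r → ‖b + c‖ ≤ r := fun b c hb hc =>
    (hultra b c).trans (max_le hb hc)
  constructor
  · intro h
    simpa [add_sub_right_comm] using hadd _ (-t) h (by rwa [norm_neg])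
  · intro h
    simpa [add_sub_right_comm] using hadd _ t h ht

theorem phim_add (hultra : ∀ x y : F, ‖x + y‖ ≤ max ‖x‖ ‖y‖) {q : ℝ} {m : ℕ} {t₁ t₂ : F}
    (ht₁ : ‖t₁‖ ≤ q ^ (-(m : ℤ))) (ht₂ : ‖t₂‖ ≤ q ^ (-(m : ℤ))) (u v : F) :
    phim q m (u + t₁) (v + t₂) = phim q m u v := by
  simp only [phim, norm_add_sub_le_iff_of_norm_le hultra ht₁,
    norm_add_sub_le_iff_of_norm_le hultra ht₂]

theorem omegaW_phim_eq_zero [MeasurableSpace F] (hultra : ∀ x y : F, ‖x + y‖ ≤ max ‖x‖ ‖y‖)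
    {μ : Measure F} (hinv : ∀ (a : F) (s : Set F), μ ((a + ·) '' s) = μ s) {ψ : F → ℂ}
    (hψadd : ∀ x y : F, ψ (x + y) = ψ x * ψ y) {q : ℝ} {m : ℕ} {x y t₁ t₂ : F}
    (ht₁ : ‖t₁‖ ≤ q ^ (-(m : ℤ))) (ht₂ : ‖t₂‖ ≤ q ^ (-(m : ℤ)))
    (hψ : ψ (y * t₁ - x * t₂) ≠ 1) : omegaW μ ψ (phim q m) x y = 0 :=
  (preservesOuterMeasure_addRight hinv t₁).integral_prod_eq_zero_of_comp_eq_smul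
    (preservesOuterMeasure_addRight hinv t₂) hψ fun u v => by
      simp only [Equiv.coe_addRight, phim_add hultra ht₁ ht₂, smul_eq_mul]
      rw [show -(x * (v + t₂) - y * (u + t₁)) = (y * t₁ - x * t₂) + -(x * v - y * u) by ring,
        hψadd]
      ring

theorem norm_le_of_forall_apply_mul_eq_one {q : ℝ} (hq : 0 < q) {ψ : F → ℂ}
    (hψnt : ∃ x : F, ‖x‖ ≤ q ∧ ψ x ≠ 1) {n : ℤ} {y : F}
    (hy : ∀ t : F, ‖t‖ ≤ q ^ n → ψ (y * t) = 1) : ‖y‖ ≤ q ^ (1 - n) := by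
  obtain ⟨a, ha, hψa⟩ := hψnt
  by_contra! hlt
  have hy0 : y ≠ 0 := by
    rintro rfl
    exact (norm_zero (E := F) ▸ hlt).not_ge (by positivity)
  refine hψa (mul_inv_cancel_left₀ hy0 a ▸ hy _ ?_)
  rw [norm_mul, norm_inv]
  calc ‖y‖⁻¹ * ‖a‖ ≤ (q ^ (1 - n))⁻¹ * q := by gcongr
    _ = q ^ n := by rw [← zpow_neg, ← zpow_add_one₀ hq.ne']; ring_nf

end Weil

theorem stmt_17_general {F : Type*} [NormedField F] [MeasurableSpace F]
    (hultra : ∀ x y : F, ‖x + y‖ ≤ max ‖x‖ ‖y‖)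
    (μ : Measure F)
    (hinv : ∀ (a : F) (s : Set F), μ ((a + ·) '' s) = μ s)
    (q : ℝ) (hq : 1 < q)
    (ψ : F → ℂ) (hψadd : ∀ x y : F, ψ (x + y) = ψ x * ψ y)
    (hψnt : ∃ x : F, ‖x‖ ≤ q ∧ ψ x ≠ 1)
    (m : ℕ) (hm : 1 ≤ m)
    (c : F) (hc : ‖c‖ ≤ q ^ (-(3 * m : ℤ)))
    (Winv : (F → F → ℂ) → (F → F → ℂ))
    (hWinv : Winv (omegaW μ ψ (phim q m)) = phim q m) :
    Winv (omegaN ψ c (omegaW μ ψ (phim q m))) = phim q m := by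
  have hq0 : 0 < q := zero_lt_one.trans hq
  suffices h : omegaN ψ c (omegaW μ ψ (phim q m)) = omegaW μ ψ (phim q m) by rw [h, hWinv]
  funext x y
  by_cases hx : ∀ s : F, ‖s‖ ≤ q ^ (-(m : ℤ)) → ψ (x * s) = 1
  · by_cases hy : ∀ t : F, ‖t‖ ≤ q ^ (-(m : ℤ)) → ψ (y * t) = 1
    · have hcy : ‖-(c * y)‖ ≤ q ^ (-(m : ℤ)) :=
        calc ‖-(c * y)‖ = ‖c‖ * ‖y‖ := by rw [norm_neg, norm_mul]
          _ ≤ q ^ (-(3 * m : ℤ)) * q ^ (1 - -(m : ℤ)) := by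
            gcongr
            exact norm_le_of_forall_apply_mul_eq_one hq0 hψnt hy
          _ ≤ q ^ (-(m : ℤ)) := by
            rw [← zpow_add₀ hq0.ne']
            exact zpow_le_zpow_right₀ hq.le (by omega)
      rw [omegaN, show -(c * x * y) = x * -(c * y) by ring, hx _ hcy, one_mul]
    · push Not at hy
      obtain ⟨t, ht, hψt⟩ := hy
      rw [omegaN, omegaW_phim_eq_zero hultra hinv hψadd (x := x) ht (norm_zero.trans_le
        (by positivity)) (by simpa using hψt), mul_zero]
  · push Not at hx
    obtain ⟨s, hs, hψs⟩ := hx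
    rw [omegaN, omegaW_phim_eq_zero hultra hinv hψadd (y := y) (norm_zero.trans_le
      (by positivity)) (norm_neg s ▸ hs) (by simpa using hψs), mul_zero]

/-- With the Weil representation of `SL_2(F)` on `S(F²)` given by the operators
`ω(n(b))` and `ω(w)` above (and `ω(w⁻¹)` the inverse of `ω(w)`, given here as any operator
`Winv` inverting `ω(w)` at `φ^m`), the function `φ^m` is fixed by
`ω(n̄(c)) = ω(w⁻¹) ω(n(c)) ω(w)` for all `c ∈ P^{3m}` (i.e. `‖c‖ ≤ q^{-3m}`):
`ω(n̄(c)) φ^m = φ^m`. -/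
theorem stmt_17 {F : Type*} [NormedField F] [MeasurableSpace F]
    (hultra : ∀ x y : F, ‖x + y‖ ≤ max ‖x‖ ‖y‖)
    (μ : Measure F)
    (hinv : ∀ (a : F) (s : Set F), μ ((a + ·) '' s) = μ s)
    (hvol : μ {x : F | ‖x‖ ≤ 1} = 1)
    (q : ℝ) (hq : 1 < q)
    (ψ : F → ℂ) (hψadd : ∀ x y : F, ψ (x + y) = ψ x * ψ y)
    (hψ1 : ∀ x : F, ‖x‖ ≤ 1 → ψ x = 1)
    (hψnt : ∃ x : F, ‖x‖ ≤ q ∧ ψ x ≠ 1)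
    (m : ℕ) (hm : 1 ≤ m)
    (c : F) (hc : ‖c‖ ≤ q ^ (-(3 * m : ℤ)))
    (Winv : (F → F → ℂ) → (F → F → ℂ))
    (hWinv : Winv (omegaW μ ψ (phim q m)) = phim q m) :
    Winv (omegaN ψ c (omegaW μ ψ (phim q m))) = phim q m :=
  stmt_17_general hultra μ hinv q hq ψ hψadd hψnt m hm c hc Winv hWinv
end
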